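/- arXiv:2604.13310 — 5 statements merged into one kernel-verified Lean document; each statement's English description precedes it below -/
import Mathlib

section
/- Let N > 0 and f : ZMod N → ℂ with all values of f rational. Then for any k, u ∈ ℤ with u coprime to the additive order M of k in ZMod N, we have f̂(u·k) = σ_u(f̂(k)), where σ_u is the field automorphism of ℚ(ζ_M) sending ζ_M to ζ_M^u. In particular, f̂(k) lies in the cyclotomic field ℚ(ζ_M). -/
/-!
Writing `e(t) = exp(2πit/N)`, the term `f(x)·e(-kx)` of `f̂(k)` is a rational multiple of
`χₓ(k)` for the additive character `χₓ = e(-x·)`. Since `M • k = 0`, each `χₓ(k)` is an `M`-th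
root of unity, hence a power of the primitive root `ζ_M`: it lies in `ℚ(ζ_M)`, and an automorphism
with `σ ζ_M = ζ_M ^ u` sends it to `χₓ(k) ^ u = χₓ(u • k)`.
-/

open Finset Real Complex

/-- The discrete Fourier transform of `f : ZMod N → ℂ` at frequency `k`. -/
noncomputable def dft (N : ℕ) [NeZero N] (f : ZMod N → ℂ) (k : ZMod N) : ℂ :=
  ∑ x : ZMod N, f x * Complex.exp (-2 * π * Complex.I * (k.val : ℂ) * (x.val : ℂ) / (N : ℂ))

open IntermediateField

theorem IsPrimitiveRoot.mem_adjoin_of_pow_eq_one {K L : Type*} [Field K] [Field L] [Algebra K L]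
    {M : ℕ} [NeZero M] {ζ w : L} (hζ : IsPrimitiveRoot ζ M) (hw : w ^ M = 1) : w ∈ K⟮ζ⟯ := by
  obtain ⟨i, -, rfl⟩ := hζ.eq_pow_of_pow_eq_one hw
  exact pow_mem (mem_adjoin_simple_self K ζ) i

theorem IsPrimitiveRoot.map_eq_zpow_of_pow_eq_one {E F : Type*} [Field E] [FunLike F E E]
    [MonoidHomClass F E E] {M : ℕ} [NeZero M] {ζ w : E} (hζ : IsPrimitiveRoot ζ M) (σ : F)
    {u : ℤ} (hσ : σ ζ = ζ ^ u) (hw : w ^ M = 1) : σ w = w ^ u := by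
  obtain ⟨i, -, rfl⟩ := hζ.eq_pow_of_pow_eq_one hw
  rw [map_pow, hσ, ← zpow_natCast, ← zpow_natCast, ← zpow_mul, ← zpow_mul, mul_comm]

theorem AddChar.pow_addOrderOf_eq_one {A M : Type*} [AddMonoid A] [Monoid M] (ψ : AddChar A M)
    (a : A) : ψ a ^ addOrderOf a = 1 := by
  rw [← map_nsmul_eq_pow, addOrderOf_nsmul_eq_zero, map_zero_eq_one]

section CharacterSums

variable {K L A ι : Type*} [Field K] [Field L] [Algebra K L] [AddCommGroup A] [Fintype ι]
  (χ : ι → AddChar A L) (c : ι → K) {k : A} [NeZero (addOrderOf k)] {ζ : L}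

theorem AddChar.sum_smul_mem_adjoin (hζ : IsPrimitiveRoot ζ (addOrderOf k)) :
    ∑ i, c i • χ i k ∈ K⟮ζ⟯ :=
  sum_mem fun i _ => smul_mem _ (hζ.mem_adjoin_of_pow_eq_one ((χ i).pow_addOrderOf_eq_one k))

theorem AddChar.coe_map_sum_smul {F : Type*} [FunLike F K⟮ζ⟯ K⟮ζ⟯] [AlgHomClass F K K⟮ζ⟯ K⟮ζ⟯]
    (hζ : IsPrimitiveRoot ζ (addOrderOf k)) (σ : F) {u : ℤ}
    (hσ : (σ ⟨ζ, mem_adjoin_simple_self K ζ⟩ : L) = ζ ^ u) (hmem : ∑ i, c i • χ i k ∈ K⟮ζ⟯) :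
    (σ ⟨_, hmem⟩ : L) = ∑ i, c i • χ i (u • k) := by
  have hw i : χ i k ∈ K⟮ζ⟯ := hζ.mem_adjoin_of_pow_eq_one ((χ i).pow_addOrderOf_eq_one k)
  have hσw i : (σ ⟨χ i k, hw i⟩ : L) = χ i k ^ u := by
    have hζ' : IsPrimitiveRoot (⟨ζ, mem_adjoin_simple_self K ζ⟩ : K⟮ζ⟯) (addOrderOf k) :=
      IsPrimitiveRoot.coe_submonoidClass_iff.mp hζ
    refine congrArg Subtype.val <| hζ'.map_eq_zpow_of_pow_eq_one σ (Subtype.ext hσ) (Subtype.ext ?_)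
    simpa using (χ i).pow_addOrderOf_eq_one k
  have hsum : (⟨_, hmem⟩ : K⟮ζ⟯) = ∑ i, c i • ⟨χ i k, hw i⟩ := Subtype.ext (by simp)
  rw [hsum, map_sum]
  simp only [map_smul, hσw, AddChar.map_zsmul_eq_zpow, IntermediateField.coe_sum,
    IntermediateField.coe_smul]

end CharacterSums

theorem dft_eq_zmod_dft (N : ℕ) [NeZero N] (f : ZMod N → ℂ) : dft N f = ZMod.dft f := by
  funext k
  rw [dft, ZMod.dft_apply]
  refine sum_congr rfl fun x _ => ?_
  have hcast : -(x * k) = ((-(x.val * k.val : ℕ) : ℤ) : ZMod N) := by simp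
  rw [hcast, ZMod.stdAddChar_coe, smul_eq_mul, mul_comm]
  congr 2
  push_cast
  ring

theorem galois_action_on_dft_general (N : ℕ) [NeZero N] (f : ZMod N → ℂ)
    (hf : ∀ x, ∃ q : ℚ, f x = (q : ℂ)) (k : ZMod N) (u : ℤ) :
    ∃ hmem : dft N f k ∈
        IntermediateField.adjoin ℚ
          {Complex.exp (2 * π * Complex.I / ((addOrderOf k : ℕ) : ℂ))},
      ∀ σ : (IntermediateField.adjoin ℚ
          {Complex.exp (2 * π * Complex.I / ((addOrderOf k : ℕ) : ℂ))}) ≃ₐ[ℚ]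
          (IntermediateField.adjoin ℚ
          {Complex.exp (2 * π * Complex.I / ((addOrderOf k : ℕ) : ℂ))}),
        ((σ ⟨Complex.exp (2 * π * Complex.I / ((addOrderOf k : ℕ) : ℂ)),
            IntermediateField.subset_adjoin ℚ _ (Set.mem_singleton _)⟩ : ℂ) =
          Complex.exp (2 * π * Complex.I / ((addOrderOf k : ℕ) : ℂ)) ^ u) →
        dft N f (u • k) = ((σ ⟨dft N f k, hmem⟩ : ℂ)) := by
  choose q hq using hf
  have hdft : dft N f = fun k => ∑ j, q j • (ZMod.stdAddChar.mulShift (-j)) k := by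
    funext k
    simp [dft_eq_zmod_dft, ZMod.dft_apply, hq, Rat.smul_def, mul_comm]
  have : NeZero (addOrderOf k) := NeZero.of_pos (addOrderOf_pos k)
  have hζ := Complex.isPrimitiveRoot_exp _ (NeZero.ne (addOrderOf k))
  rw [hdft]
  exact ⟨AddChar.sum_smul_mem_adjoin _ q hζ,
    fun σ hσ => (AddChar.coe_map_sum_smul _ q hζ σ hσ _).symm⟩

theorem galois_action_on_dft (N : ℕ) [NeZero N] (f : ZMod N → ℂ)
    (hf : ∀ x, ∃ q : ℚ, f x = (q : ℂ)) (k : ZMod N) (u : ℤ)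
    (hu : IsCoprime u ((addOrderOf k : ℕ) : ℤ)) :
    ∃ hmem : dft N f k ∈
        IntermediateField.adjoin ℚ
          {Complex.exp (2 * π * Complex.I / ((addOrderOf k : ℕ) : ℂ))},
      ∀ σ : (IntermediateField.adjoin ℚ
          {Complex.exp (2 * π * Complex.I / ((addOrderOf k : ℕ) : ℂ))}) ≃ₐ[ℚ]
          (IntermediateField.adjoin ℚ
          {Complex.exp (2 * π * Complex.I / ((addOrderOf k : ℕ) : ℂ))}),
        ((σ ⟨Complex.exp (2 * π * Complex.I / ((addOrderOf k : ℕ) : ℂ)),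
            IntermediateField.subset_adjoin ℚ _ (Set.mem_singleton _)⟩ : ℂ) =
          Complex.exp (2 * π * Complex.I / ((addOrderOf k : ℕ) : ℂ)) ^ u) →
        dft N f (u • k) = ((σ ⟨dft N f k, hmem⟩ : ℂ)) :=
  galois_action_on_dft_general N f hf k u
end

section
/- If N > 1 is odd, then every element of ZMod N is the sum of exactly two units of ZMod N. -/
theorem sum_of_two_units_of_odd (N : ℕ) (hN : 1 < N) (hodd : Odd N) (c : ZMod N) :
    ∃ a b : (ZMod N)ˣ, c = (a : ZMod N) + (b : ZMod N) := by
  have hN0 : N ≠ 0 := by omega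
  haveI : NeZero N := ⟨hN0⟩
  set k := c.val with hk
  set f : ℕ → ℕ := fun p => if (k : ZMod p) = 1 then 2 else 1 with hf
  obtain ⟨x, hx⟩ := Nat.chineseRemainderOfFinset f id N.primeFactors
    (fun p hp => (Nat.prime_of_mem_primeFactors hp).ne_zero)
    (fun p hp q hq hpq => (Nat.coprime_primes (Nat.prime_of_mem_primeFactors hp)
      (Nat.prime_of_mem_primeFactors hq)).mpr hpq)
  have key : ∀ p : ℕ, p.Prime → p ∣ N →
      (x : ZMod p) ≠ 0 ∧ (k : ZMod p) ≠ (x : ZMod p) := by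
    intro p pp hpN
    haveI : Fact p.Prime := ⟨pp⟩
    have hp3 : 3 ≤ p := by
      rcases pp.eq_two_or_odd' with h2 | hpo
      · exfalso
        rw [Nat.odd_iff] at hodd
        have : 2 ∣ N := h2 ▸ hpN
        omega
      · have := pp.two_le
        rcases Nat.odd_iff.mp hpo with h
        omega
    have h20 : (2 : ZMod p) ≠ 0 := by
      intro h
      have : ((2 : ℕ) : ZMod p) = 0 := by exact_mod_cast h
      have := Nat.le_of_dvd (by norm_num) ((ZMod.natCast_eq_zero_iff 2 p).mp this)
      omega
    have h12 : (1 : ZMod p) ≠ 2 := by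
      intro h
      exact one_ne_zero (α := ZMod p) (by linear_combination -h)
    have hmem : p ∈ N.primeFactors := Nat.mem_primeFactors.mpr ⟨pp, hpN, hN0⟩
    have hxp : (x : ZMod p) = (f p : ZMod p) :=
      (ZMod.natCast_eq_natCast_iff _ _ _).mpr (hx p hmem)
    by_cases h1 : (k : ZMod p) = 1
    · have hfp : f p = 2 := by simp [hf, h1]
      rw [hxp, hfp]
      push_cast
      exact ⟨h20, by rw [h1]; exact h12⟩
    · have hfp : f p = 1 := by simp [hf, h1]
      rw [hxp, hfp, Nat.cast_one]
      exact ⟨one_ne_zero, fun h => h1 (by rw [h])⟩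
  have hxcop : Nat.Coprime x N := by
    rw [Nat.coprime_comm]
    by_contra hcontra
    obtain ⟨p, pp, hpN, hpx⟩ := Nat.Prime.not_coprime_iff_dvd.mp hcontra
    haveI : Fact p.Prime := ⟨pp⟩
    exact (key p pp hpN).1 ((ZMod.natCast_eq_zero_iff x p).mpr hpx)
  set b := k + (N - 1) * x with hb
  have hbcop : Nat.Coprime b N := by
    rw [Nat.coprime_comm]
    by_contra hcontra
    obtain ⟨p, pp, hpN, hpb⟩ := Nat.Prime.not_coprime_iff_dvd.mp hcontra
    haveI : Fact p.Prime := ⟨pp⟩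
    apply (key p pp hpN).2
    have hb0 : ((b : ℕ) : ZMod p) = 0 := (ZMod.natCast_eq_zero_iff b p).mpr hpb
    have hNp : ((N : ℕ) : ZMod p) = 0 := (ZMod.natCast_eq_zero_iff N p).mpr hpN
    have hN1 : ((N - 1 : ℕ) : ZMod p) = -1 := by
      have h' : (N - 1) + 1 = N := by omega
      have h'' := congrArg (fun t : ℕ => (t : ZMod p)) h'
      push_cast at h''
      linear_combination h'' + hNp
    rw [hb, Nat.cast_add, Nat.cast_mul, hN1] at hb0
    linear_combination hb0
  refine ⟨ZMod.unitOfCoprime x hxcop, ZMod.unitOfCoprime b hbcop, ?_⟩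
  simp only [ZMod.coe_unitOfCoprime]
  have hNz : ((N : ℕ) : ZMod N) = 0 := ZMod.natCast_self N
  have hN1 : ((N - 1 : ℕ) : ZMod N) = -1 := by
    have h' : (N - 1) + 1 = N := by omega
    have h'' := congrArg (fun t : ℕ => (t : ZMod N)) h'
    push_cast at h''
    linear_combination h'' + hNz
  have hc : ((k : ℕ) : ZMod N) = c := by
    rw [hk, ZMod.natCast_val, ZMod.cast_id]
  rw [hb, Nat.cast_add, Nat.cast_mul, hN1, hc]
  ring
end

section
/- For every N > 1, every element of ZMod N is the sum of at most three units of ZMod N. -/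
/-!
In a local ring `c - 1` and `c - 2` differ by `1`, so they are not both non-units: hence
`c = (c - 1) + 1` or `c = (c - 2) + 1 + 1` is a sum of two or of three units, and always of two
units when `2` is a unit. Write `N = 2 ^ k * m` with `m` odd. By the Chinese remainder theorem
`ZMod m` is a product of the local rings `ZMod (p ^ e)` with `p` odd, so every element of `ZMod m`
is a sum of two units and also of three; splitting `ZMod N ≃ ZMod (2 ^ k) × ZMod m`, the number
of summands on the odd side can therefore be matched to the one needed in `ZMod (2 ^ k)`.
-/

open Finset

def IsSumOfUnits {R : Type*} [Semiring R] (n : ℕ) (x : R) : Prop :=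
  ∃ u : Fin n → R, (∀ i, IsUnit (u i)) ∧ ∑ i, u i = x

theorem IsUnit.isSumOfUnits_one {R : Type*} [Semiring R] {x : R} (hx : IsUnit x) :
    IsSumOfUnits 1 x :=
  ⟨fun _ ↦ x, fun _ ↦ hx, by simp⟩

namespace IsSumOfUnits

variable {R S : Type*} [Semiring R] [Semiring S] {n : ℕ}

theorem add {m : ℕ} {x y : R} (hx : IsSumOfUnits n x) (hy : IsSumOfUnits m y) :
    IsSumOfUnits (n + m) (x + y) := by
  obtain ⟨u, hu, rfl⟩ := hx
  obtain ⟨v, hv, rfl⟩ := hy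
  exact ⟨Fin.append u v, Fin.addCases (by simpa using hu) (by simpa using hv),
    by simp [Fin.sum_univ_add]⟩

theorem map {F : Type*} [FunLike F R S] [RingHomClass F R S] (f : F) {x : R}
    (h : IsSumOfUnits n x) : IsSumOfUnits n (f x) := by
  obtain ⟨u, hu, rfl⟩ := h
  exact ⟨fun i ↦ f (u i), fun i ↦ (hu i).map f, (map_sum f u univ).symm⟩

theorem prodMk {x : R} {y : S} (hx : IsSumOfUnits n x) (hy : IsSumOfUnits n y) :
    IsSumOfUnits n (x, y) := by
  obtain ⟨u, hu, rfl⟩ := hx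
  obtain ⟨v, hv, rfl⟩ := hy
  exact ⟨fun i ↦ (u i, v i), fun i ↦ Prod.isUnit_iff.mpr ⟨hu i, hv i⟩,
    Prod.ext Prod.fst_sum Prod.snd_sum⟩

theorem pi {ι : Type*} {A : ι → Type*} [∀ i, Semiring (A i)] {x : ∀ i, A i}
    (h : ∀ i, IsSumOfUnits n (x i)) : IsSumOfUnits n x := by
  choose u hu hsum using h
  exact ⟨fun k i ↦ u i k, fun k ↦ Pi.isUnit_iff.mpr fun i ↦ hu i k,
    funext fun i ↦ (sum_apply i univ _).trans (hsum i)⟩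

end IsSumOfUnits

namespace IsLocalRing

variable {R : Type*} [CommRing R] [IsLocalRing R]

theorem isUnit_sub_one_or_isUnit_sub_two (c : R) : IsUnit (c - 1) ∨ IsUnit (c - 2) := by
  refine (isUnit_or_isUnit_one_sub_self (c - 1)).imp_right fun h ↦ ?_
  rw [← neg_sub, IsUnit.neg_iff]
  convert h using 1
  ring

theorem isSumOfUnits_two_or_three (c : R) : IsSumOfUnits 2 c ∨ IsSumOfUnits 3 c := by
  have one := (isUnit_one (M := R)).isSumOfUnits_one
  rcases isUnit_sub_one_or_isUnit_sub_two c with h | h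
  · exact .inl (by simpa using h.isSumOfUnits_one.add one)
  · exact .inr <| by
      simpa [add_assoc, one_add_one_eq_two] using (h.isSumOfUnits_one.add one).add one

theorem isSumOfUnits_two_of_isUnit_two (h2 : IsUnit (2 : R)) (c : R) : IsSumOfUnits 2 c := by
  rcases isUnit_sub_one_or_isUnit_sub_two c with h | h
  · simpa using h.isSumOfUnits_one.add isUnit_one.isSumOfUnits_one
  · simpa using h.isSumOfUnits_one.add h2.isSumOfUnits_one

end IsLocalRing

namespace ZMod

theorem isLocalRing_prime_pow {p k : ℕ} [Fact p.Prime] (hk : k ≠ 0) :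
    IsLocalRing (ZMod (p ^ k)) :=
  have : Nontrivial (ZMod (p ^ k)) :=
    nontrivial_iff.mpr (Nat.one_lt_pow hk (Fact.out : p.Prime).one_lt).ne'
  .of_surjective' (PadicInt.toZModPow k) (ringHom_surjective _)

theorem isSumOfUnits_two_of_odd {m : ℕ} (hm : Odd m) (c : ZMod m) : IsSumOfUnits 2 c := by
  have hm0 : m ≠ 0 := by rintro rfl; exact Nat.not_odd_zero hm
  have h2 : IsUnit (2 : ZMod m) := by
    exact_mod_cast (isUnit_iff_coprime 2 m).mpr (Nat.coprime_two_left.mpr hm)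
  rw [← (equivPi m hm0).symm_apply_apply c]
  refine .map _ (.pi fun p ↦ ?_)
  have hp := Nat.prime_of_mem_primeFactors p.2
  have : Fact (p : ℕ).Prime := ⟨hp⟩
  have := isLocalRing_prime_pow (p := p)
    (hp.factorization_pos_of_dvd hm0 (Nat.dvd_of_mem_primeFactors p.2)).ne'
  refine IsLocalRing.isSumOfUnits_two_of_isUnit_two ?_ _
  simpa only [map_ofNat] using h2.map ((Pi.evalRingHom _ p).comp (equivPi m hm0).toRingHom)

theorem isSumOfUnits_two_or_three {N : ℕ} (hN : N ≠ 0) (c : ZMod N) :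
    IsSumOfUnits 2 c ∨ IsSumOfUnits 3 c := by
  by_cases hodd : Odd N
  · exact .inl (isSumOfUnits_two_of_odd hodd c)
  obtain ⟨k, m, hm, rfl⟩ := Nat.exists_eq_two_pow_mul_odd hN
  have hk : k ≠ 0 := by rintro rfl; exact hodd (by simpa using hm)
  have := isLocalRing_prime_pow (p := 2) hk
  let e := chineseRemainder ((Nat.coprime_two_left.mpr hm).pow_left k)
  have two := isSumOfUnits_two_of_odd hm (e c).2
  have three : IsSumOfUnits 3 (e c).2 := by
    simpa using (isSumOfUnits_two_of_odd hm ((e c).2 - 1)).add isUnit_one.isSumOfUnits_one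
  rw [← e.symm_apply_apply c]
  exact (IsLocalRing.isSumOfUnits_two_or_three (e c).1).imp
    (fun h ↦ (h.prodMk two).map e.symm) (fun h ↦ (h.prodMk three).map e.symm)

end ZMod

theorem sum_of_at_most_three_units (N : ℕ) (hN : 1 < N) (c : ZMod N) :
    (∃ a : (ZMod N)ˣ, c = (a : ZMod N)) ∨
    (∃ a b : (ZMod N)ˣ, c = (a : ZMod N) + (b : ZMod N)) ∨
    (∃ a b d : (ZMod N)ˣ, c = (a : ZMod N) + (b : ZMod N) + (d : ZMod N)) := by
  rcases ZMod.isSumOfUnits_two_or_three (by omega) c with ⟨u, hu, rfl⟩ | ⟨u, hu, rfl⟩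
  · exact .inr (.inl ⟨(hu 0).unit, (hu 1).unit, by simp [Fin.sum_univ_two]⟩)
  · exact .inr (.inr ⟨(hu 0).unit, (hu 1).unit, (hu 2).unit, by simp [Fin.sum_univ_three]⟩)
end

section
/- Let G be a finite abelian group and f, g : G → ℝ with ρ₂(f) = ρ₂(g). Then for every character χ of G with f̂(χ) ≠ 0, we have ĝ(χ) ≠ 0 and |f̂(χ)/ĝ(χ)| = 1. -/
open Finset

/-- The `n`-th order autocorrelation of a real-valued `f : G → ℝ`. -/
noncomputable def rho {G : Type*} [AddCommGroup G] [Fintype G] (n : ℕ) (f : G → ℝ)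
    (t : Fin (n - 1) → G) : ℝ :=
  ∑ x, f x * ∏ i, f (x + t i)

/-- The Fourier transform of a real-valued `f : G → ℝ` at an additive character `χ`. -/
noncomputable def fhat {G : Type*} [AddCommGroup G] [Fintype G] (f : G → ℝ)
    (χ : AddChar G ℂ) : ℂ :=
  ∑ x, (f x : ℂ) * (starRingEnd ℂ) (χ x)

lemma conj_mul_self {G : Type*} [AddCommGroup G] [Fintype G] (χ : AddChar G ℂ) (x : G) :
    (starRingEnd ℂ) (χ x) * χ x = 1 := by
  rw [← AddChar.inv_apply_eq_conj, inv_mul_cancel₀]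
  intro h
  have := AddChar.norm_apply χ x
  rw [h] at this; simp at this

lemma key {G : Type*} [AddCommGroup G] [Fintype G] (f : G → ℝ) (χ : AddChar G ℂ) :
    fhat f χ * (starRingEnd ℂ) (fhat f χ)
      = ∑ t, ((rho 2 f fun _ => t : ℝ) : ℂ) * χ t := by
  calc fhat f χ * (starRingEnd ℂ) (fhat f χ)
      = ∑ x, ∑ y, ((f x : ℂ) * (f y : ℂ)) * ((starRingEnd ℂ) (χ x) * χ y) := by
        unfold fhat
        rw [map_sum, Finset.sum_mul_sum]
        refine Finset.sum_congr rfl fun x _ => Finset.sum_congr rfl fun y _ => ?_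
        simp only [map_mul, Complex.conj_conj, Complex.conj_ofReal]
        ring
    _ = ∑ x, ∑ t, ((f x : ℂ) * (f (x + t) : ℂ)) * χ t := by
        refine Finset.sum_congr rfl fun x _ => ?_
        refine (Fintype.sum_equiv (Equiv.addLeft x) _ _ fun t => ?_).symm
        simp only [Equiv.coe_addLeft, AddChar.map_add_eq_mul]
        calc ((f x : ℂ) * (f (x + t) : ℂ)) * χ t
            = ((f x : ℂ) * (f (x + t) : ℂ)) * (((starRingEnd ℂ) (χ x) * χ x) * χ t) := by
              rw [conj_mul_self]; ring
          _ = ((f x : ℂ) * (f (x + t) : ℂ)) * ((starRingEnd ℂ) (χ x) * (χ x * χ t)) := by ring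
    _ = ∑ t, ((rho 2 f fun _ => t : ℝ) : ℂ) * χ t := by
        rw [Finset.sum_comm]
        refine Finset.sum_congr rfl fun t _ => ?_
        unfold rho
        push_cast [Fin.prod_univ_one]
        rw [Finset.sum_mul]

theorem ratio_has_modulus_one {G : Type*} [AddCommGroup G] [Fintype G] (f g : G → ℝ)
    (h2 : rho 2 f = rho 2 g) (χ : AddChar G ℂ) (hχ : fhat f χ ≠ 0) :
    fhat g χ ≠ 0 ∧ ‖fhat f χ / fhat g χ‖ = 1 := by
  have hk : fhat f χ * (starRingEnd ℂ) (fhat f χ) = fhat g χ * (starRingEnd ℂ) (fhat g χ) := by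
    rw [key, key]
    exact Finset.sum_congr rfl fun t _ => by rw [h2]
  rw [Complex.mul_conj, Complex.mul_conj] at hk
  have hsq : Complex.normSq (fhat f χ) = Complex.normSq (fhat g χ) := by
    exact_mod_cast hk
  have habs : ‖fhat f χ‖ = ‖fhat g χ‖ := by
    rw [Complex.norm_def, Complex.norm_def, hsq]
  have hg : fhat g χ ≠ 0 := by
    intro h
    rw [h, norm_zero] at habs
    exact hχ (norm_eq_zero.mp habs)
  refine ⟨hg, ?_⟩
  rw [norm_div, habs, div_self (by simpa using hg)]
end

section
/- Among all 6-tuples (k₁,...,k₆) of elements of ZMod 6 with k₁+···+k₆ = 0, every tuple can be partitioned into two nonempty proper sub-tuples each summing to 0, except for the tuples (1,1,1,1,1,1) and (5,5,5,5,5,5) (up to permutation). -/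
set_option synthInstance.maxSize 5000 in
set_option synthInstance.maxHeartbeats 4000000 in
set_option maxHeartbeats 4000000 in
theorem okP : ∀ c0 < 7, ∀ c1 < 7-c0, ∀ c2 < 7-c0-c1, ∀ c3 < 7-c0-c1-c2, ∀ c4 < 7-c0-c1-c2-c3,
    ¬((c1+2*c2+3*c3+4*c4+5*(6-(c0+c1+c2+c3+c4))) % 6 = 0) ∨
      c1 = 6 ∨ 6-(c0+c1+c2+c3+c4) = 6 ∨
      ∃ d0 < c0+1, ∃ d1 < c1+1, ∃ d2 < c2+1, ∃ d3 < c3+1, ∃ d4 < c4+1,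
        ∃ d5 < (6-(c0+c1+c2+c3+c4))+1,
        0 < d0+d1+d2+d3+d4+d5 ∧ d0+d1+d2+d3+d4+d5 < 6 ∧
        (d1+2*d2+3*d3+4*d4+5*d5) % 6 = 0 := by decide

theorem ok_prop (c0 c1 c2 c3 c4 c5 : ℕ) (hsum : c0+c1+c2+c3+c4+c5 = 6)
    (hmod : (c1+2*c2+3*c3+4*c4+5*c5) % 6 = 0) :
    c1 = 6 ∨ c5 = 6 ∨ ∃ d0 d1 d2 d3 d4 d5 : ℕ,
      d0 ≤ c0 ∧ d1 ≤ c1 ∧ d2 ≤ c2 ∧ d3 ≤ c3 ∧ d4 ≤ c4 ∧ d5 ≤ c5 ∧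
      0 < d0+d1+d2+d3+d4+d5 ∧ d0+d1+d2+d3+d4+d5 < 6 ∧
      (d1+2*d2+3*d3+4*d4+5*d5) % 6 = 0 := by
  have h5 : 6-(c0+c1+c2+c3+c4) = c5 := by omega
  have h := okP c0 (by omega) c1 (by omega) c2 (by omega) c3 (by omega) c4 (by omega)
  rw [h5] at h
  rcases h with hn | hc1 | hc5 | hg
  · exact absurd hmod hn
  · exact Or.inl hc1
  · exact Or.inr (Or.inl hc5)
  · obtain ⟨d0, hd0, d1, hd1, d2, hd2, d3, hd3, d4, hd4, d5, hd5, hp, hl, hm⟩ := hg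
    exact Or.inr (Or.inr ⟨d0, d1, d2, d3, d4, d5, by omega, by omega, by omega, by omega,
      by omega, by omega, hp, hl, hm⟩)

theorem zmod_cast_wsum (d0 d1 d2 d3 d4 d5 : ℕ) :
    (Multiset.replicate d0 (0 : ZMod 6) + Multiset.replicate d1 1 +
      Multiset.replicate d2 2 + Multiset.replicate d3 3 +
      Multiset.replicate d4 4 + Multiset.replicate d5 5).sum
      = ((d1+2*d2+3*d3+4*d4+5*d5 : ℕ) : ZMod 6) := by
  simp only [Multiset.sum_add, Multiset.sum_replicate, nsmul_eq_mul]
  push_cast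
  ring

theorem six_tuples_splitting (m : Multiset (ZMod 6)) (hcard : Multiset.card m = 6)
    (hsum : m.sum = 0) :
    (∃ a b : Multiset (ZMod 6), a + b = m ∧ a ≠ 0 ∧ b ≠ 0 ∧ a.sum = 0 ∧ b.sum = 0) ↔
      (m ≠ Multiset.replicate 6 (1 : ZMod 6) ∧ m ≠ Multiset.replicate 6 (5 : ZMod 6)) := by
  constructor
  · rintro ⟨a, b, rfl, ha, hb, hsa, hsb⟩
    have key : ∀ x : ZMod 6, (∀ k < 6, ¬(k ≠ 0 ∧ k • x = 0)) →
        a + b ≠ Multiset.replicate 6 x := by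
      intro x hx habs
      have hle : a ≤ Multiset.replicate 6 x := habs ▸ le_self_add
      obtain ⟨k, hk6, rfl⟩ := Multiset.le_replicate_iff.mp hle
      have hk0 : k ≠ 0 := by
        rintro rfl; exact ha rfl
      have hk6' : k < 6 := by
        rcases lt_or_eq_of_le hk6 with h | rfl
        · exact h
        · exfalso
          have h' := congrArg Multiset.card habs
          simp only [Multiset.card_add, Multiset.card_replicate] at h'
          exact hb (Multiset.card_eq_zero.mp (by omega))
      have : (Multiset.replicate k x).sum = k • x := Multiset.sum_replicate k x
      rw [this] at hsa
      exact hx k hk6' ⟨hk0, hsa⟩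
    constructor
    · exact key 1 (by decide)
    · exact key 5 (by decide)
  · rintro ⟨hm1, hm5⟩
    set c0 := m.count 0 with hc0
    set c1 := m.count 1 with hc1
    set c2 := m.count 2 with hc2
    set c3 := m.count 3 with hc3
    set c4 := m.count 4 with hc4
    set c5 := m.count 5 with hc5
    have hdecomp : m = Multiset.replicate c0 0 + Multiset.replicate c1 1 +
        Multiset.replicate c2 2 + Multiset.replicate c3 3 +
        Multiset.replicate c4 4 + Multiset.replicate c5 5 := by
      refine Multiset.ext.mpr fun x => ?_
      rcases (by decide : ∀ y : ZMod 6, y = 0 ∨ y = 1 ∨ y = 2 ∨ y = 3 ∨ y = 4 ∨ y = 5) x with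
        rfl | rfl | rfl | rfl | rfl | rfl <;>
        simp (config := { decide := true }) [Multiset.count_replicate, hc0, hc1, hc2, hc3, hc4, hc5]
    have hA : c0+c1+c2+c3+c4+c5 = 6 := by
      have := congrArg Multiset.card hdecomp
      simpa [Multiset.card_replicate, hcard] using this.symm
    have hmod : (c1+2*c2+3*c3+4*c4+5*c5) % 6 = 0 := by
      have h1 : ((c1+2*c2+3*c3+4*c4+5*c5 : ℕ) : ZMod 6) = 0 := by
        rw [← zmod_cast_wsum, ← hdecomp, hsum]
      have := (ZMod.natCast_eq_zero_iff _ 6).mp h1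
      omega
    rcases ok_prop c0 c1 c2 c3 c4 c5 hA hmod with hc | hc | hd
    · exfalso
      apply hm1
      have hz : c0 = 0 ∧ c2 = 0 ∧ c3 = 0 ∧ c4 = 0 ∧ c5 = 0 := by omega
      rw [hdecomp, hc, hz.1, hz.2.1, hz.2.2.1, hz.2.2.2.1, hz.2.2.2.2]
      simp
    · exfalso
      apply hm5
      have hz : c0 = 0 ∧ c1 = 0 ∧ c2 = 0 ∧ c3 = 0 ∧ c4 = 0 := by omega
      rw [hdecomp, hc, hz.1, hz.2.1, hz.2.2.1, hz.2.2.2.1, hz.2.2.2.2]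
      simp
    · obtain ⟨d0, d1, d2, d3, d4, d5, h0, h1, h2, h3, h4, h5, hpos, hlt, hdm⟩ := hd
      set a := Multiset.replicate d0 (0 : ZMod 6) + Multiset.replicate d1 1 +
        Multiset.replicate d2 2 + Multiset.replicate d3 3 +
        Multiset.replicate d4 4 + Multiset.replicate d5 5 with ha
      have hle : a ≤ m := by
        rw [hdecomp, ha]
        exact add_le_add (add_le_add (add_le_add (add_le_add (add_le_add
          (Multiset.replicate_mono _ h0) (Multiset.replicate_mono _ h1))
          (Multiset.replicate_mono _ h2)) (Multiset.replicate_mono _ h3))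
          (Multiset.replicate_mono _ h4)) (Multiset.replicate_mono _ h5)
      have hcarda : Multiset.card a = d0+d1+d2+d3+d4+d5 := by
        simp [ha, Multiset.card_replicate]
      have hane : a ≠ 0 := Multiset.card_pos.mp (by rw [hcarda]; exact hpos)
      have hane2 : m - a ≠ 0 := by
        have hco : 0 < Multiset.card (m - a) := by
          rw [Multiset.card_sub hle, hcarda, hcard]
          exact Nat.sub_pos_of_lt hlt
        exact Multiset.card_pos.mp hco
      have hsa : a.sum = 0 := by
        rw [ha, zmod_cast_wsum]
        exact (ZMod.natCast_eq_zero_iff _ 6).mpr (Nat.dvd_of_mod_eq_zero hdm)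
      have heq : a + (m - a) = m := by
        rw [add_comm]
        exact tsub_add_cancel_of_le hle
      refine ⟨a, m - a, heq, hane, hane2, hsa, ?_⟩
      have := congrArg Multiset.sum heq
      rw [Multiset.sum_add, hsa, zero_add] at this
      rw [this, hsum]
end
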